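/- Let $(W,S)$ be a Coxeter group with Demazure product $*$. For any $x, y \in W$, $\mathrm{supp}(x*y) = \mathrm{supp}(x) \cup \mathrm{supp}(y)$, where $\mathrm{supp}(w)$ is the set of simple reflections appearing in some (equivalently, any) reduced expression of $w$. -/

import Mathlib

/-- The Bruhat order on a Coxeter group, via the subword property. -/
def CoxeterSystem.BruhatLE {B W : Type*} [Group W] {M : CoxeterMatrix B}
    (cs : CoxeterSystem M W) (u w : W) : Prop :=
  ∃ ω : List B, cs.IsReduced ω ∧ cs.wordProd ω = w ∧
    ∃ ω' : List B, ω'.Sublist ω ∧ cs.wordProd ω' = u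

/-- `m` is the Demazure product of `x` and `y`: the unique Bruhat-maximal element of
`{u u' : u ≤ x, u' ≤ y}`. -/
def CoxeterSystem.IsDemazureProd {B W : Type*} [Group W] {M : CoxeterMatrix B}
    (cs : CoxeterSystem M W) (x y m : W) : Prop :=
  (∃ u u' : W, cs.BruhatLE u x ∧ cs.BruhatLE u' y ∧ m = u * u') ∧
    ∀ z : W, (∃ u u' : W, cs.BruhatLE u x ∧ cs.BruhatLE u' y ∧ z = u * u') →
      cs.BruhatLE z m

/-- The support of `w`: the set of simple reflections appearing in some (equivalently, any)
reduced expression of `w`. -/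
def CoxeterSystem.supp {B W : Type*} [Group W] {M : CoxeterMatrix B}
    (cs : CoxeterSystem M W) (w : W) : Set B :=
  {i : B | ∃ ω : List B, cs.IsReduced ω ∧ cs.wordProd ω = w ∧ i ∈ ω}

/-!
Both inclusions come from one fact: if `ξ` is a reduced word and `ν` is any word for the same
element, then every simple reflection occurring in `ξ` occurs in `ν`. It gives
`supp u ⊆ supp w` whenever `u` is a subword of a reduced word for `w`, and
`supp (u * u') ⊆ supp u ∪ supp u'`; maximality of the Demazure product gives `x, y ≤ x * y`.

The fact follows from the exchange and deletion properties, which come from Tits' permutation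
representation of `W` on `W × ZMod 2`: the parity of the number of occurrences of `t` in the
right inversion sequence of a word depends only on the element the word represents.
-/

open List

theorem List.even_count_of_getElem_add {α : Type*} [BEq α] {L : List α} {m : ℕ}
    (hL : L.length = 2 * m) (h : ∀ k (hk : k < m), L[k + m] = L[k]) (a : α) :
    Even (L.count a) := by
  have hdrop : L.drop m = L.take m :=
    ext_getElem (by simp; omega) fun k h₁ h₂ => by
      simp only [getElem_drop, getElem_take]
      convert h k (by simp at h₂; omega) using 2
      omega
  rw [← take_append_drop m L, count_append, hdrop]
  exact ⟨_, rfl⟩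

namespace CoxeterSystem

variable {B W : Type*} [Group W] {M : CoxeterMatrix B} (cs : CoxeterSystem M W)

local prefix:100 "s" => cs.simple
local prefix:100 "π" => cs.wordProd
local prefix:100 "ris " => cs.rightInvSeq
local prefix:100 "lis " => cs.leftInvSeq

theorem reverse_alternatingWord_two_mul (i j : B) (m : ℕ) :
    (alternatingWord i j (2 * m)).reverse = alternatingWord j i (2 * m) := by
  induction m with
  | zero => rfl
  | succ m ih =>
    rw [Nat.mul_succ, alternatingWord_succ', alternatingWord_succ', alternatingWord_succ,
      alternatingWord_succ]
    simp [ih]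

theorem prod_map_alternatingWord_two_mul {G : Type*} [Monoid G] (f : B → G) (i j : B) (m : ℕ) :
    ((alternatingWord i j (2 * m)).map f).prod = (f i * f j) ^ m := by
  induction m with
  | zero => simp [alternatingWord]
  | succ m ih =>
    rw [Nat.mul_succ, alternatingWord_succ', alternatingWord_succ']
    simp [ih, pow_succ', mul_assoc]

theorem getElem_leftInvSeq_alternatingWord_add (i j : B) (k : ℕ) (hk : k < M i j) :
    (lis (alternatingWord i j (2 * M i j)))[k + M i j]'(by simp; omega) =
      (lis (alternatingWord i j (2 * M i j)))[k]'(by simp; omega) := by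
  rw [getElem_leftInvSeq_alternatingWord _ _ _ _ _ (by omega),
    getElem_leftInvSeq_alternatingWord _ _ _ _ _ (by omega), prod_alternatingWord_eq_mul_pow,
    prod_alternatingWord_eq_mul_pow, if_neg (by simp), if_neg (by simp),
    show (2 * (k + M i j) + 1) / 2 = k + M i j by omega, show (2 * k + 1) / 2 = k by omega,
    pow_add, M.symmetric, simple_mul_simple_pow, mul_one]

theorem even_count_rightInvSeq_alternatingWord [DecidableEq W] (i j : B) (t : W) :
    Even ((ris (alternatingWord i j (2 * M i j))).count t) := by
  rw [← reverse_alternatingWord_two_mul, rightInvSeq_reverse, count_reverse, M.symmetric]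
  exact even_count_of_getElem_add (by simp)
    (cs.getElem_leftInvSeq_alternatingWord_add j i) t

theorem simple_conj_eq_simple_iff (i : B) (w : W) : s i * w * s i = s i ↔ w = s i := by
  constructor
  · intro h
    simpa [mul_assoc] using congrArg (fun z => s i * z * s i) h
  · rintro rfl
    simp

section Tits

variable [DecidableEq W]

def titsPerm (i : B) : Equiv.Perm (W × ZMod 2) :=
  Function.Involutive.toPerm (fun p => (s i * p.1 * s i, p.2 + if p.1 = s i then 1 else 0))
    fun ⟨w, a⟩ => by
      ext
      · simp [mul_assoc]
      · simp only [simple_conj_eq_simple_iff, add_assoc]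
        split_ifs <;> decide +revert

theorem titsPerm_apply (i : B) (w : W) (a : ZMod 2) :
    cs.titsPerm i (w, a) = (s i * w * s i, a + if w = s i then 1 else 0) := rfl

theorem prod_map_titsPerm_apply (ω : List B) (w : W) (a : ZMod 2) :
    (ω.map cs.titsPerm).prod (w, a) = (π ω * w * (π ω)⁻¹, a + (ris ω).count w) := by
  induction ω with
  | nil => simp
  | cons i ω ih =>
    have hconj : π ω * w * (π ω)⁻¹ = s i ↔ (π ω)⁻¹ * s i * π ω = w := by
      constructor <;> intro h <;> rw [← h] <;> group
    simp only [map_cons, prod_cons, Equiv.Perm.mul_apply, ih, titsPerm_apply, rightInvSeq,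
      count_cons, hconj, wordProd_cons, mul_inv_rev, inv_simple, beq_iff_eq]
    ext
    · simp only [mul_assoc]
    · split_ifs <;> push_cast <;> ring

theorem isLiftable_titsPerm : M.IsLiftable cs.titsPerm := fun i j => by
  ext ⟨w, a⟩ : 1
  rw [← prod_map_alternatingWord_two_mul, prod_map_titsPerm_apply]
  have h1 : π (alternatingWord i j (2 * M i j)) = 1 := by
    rw [wordProd, prod_map_alternatingWord_two_mul, simple_mul_simple_pow]
  rw [h1, (ZMod.natCast_eq_zero_iff_even).mpr (cs.even_count_rightInvSeq_alternatingWord i j w)]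
  simp

def titsHom : W →* Equiv.Perm (W × ZMod 2) := cs.lift ⟨cs.titsPerm, cs.isLiftable_titsPerm⟩

theorem titsHom_wordProd (ω : List B) : cs.titsHom (π ω) = (ω.map cs.titsPerm).prod := by
  rw [wordProd, map_list_prod, map_map]
  congr 1
  exact map_congr_left fun i _ => cs.lift_apply_simple cs.isLiftable_titsPerm i

theorem natCast_count_rightInvSeq_eq {ω ω' : List B} (h : π ω = π ω') (t : W) :
    ((ris ω).count t : ZMod 2) = (ris ω').count t := by
  have := congrArg (fun f => (f (t, 0)).2) (congrArg cs.titsHom h)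
  simpa [titsHom_wordProd, prod_map_titsPerm_apply] using this

end Tits

theorem simple_mem_rightInvSeq_of_isRightDescent {ω : List B} {i : B}
    (h : cs.IsRightDescent (π ω) i) : s i ∈ ris ω := by
  classical
  obtain ⟨τ, hτ, hτω⟩ := cs.exists_isReduced (π ω * s i)
  have hnot : s i ∉ ris τ := fun hmem => by
    have := (cs.isRightInversion_of_mem_rightInvSeq hτ hmem).2
    rw [← hτω, simple_mul_simple_cancel_right] at this
    exact lt_asymm h this
  have hcount : (ris (τ.concat i)).count (s i) = 1 := by
    have hmap := count_map_of_injective (ris τ) _ (MulAut.conj (s i)).injective (s i)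
    rw [show MulAut.conj (s i) (s i) = s i by simp, count_eq_zero.mpr hnot] at hmap
    rw [rightInvSeq_concat, concat_eq_append, count_append, hmap]
    simp
  have hprod : π (τ.concat i) = π ω := by
    rw [wordProd_concat, ← hτω, simple_mul_simple_cancel_right]
  have hodd := cs.natCast_count_rightInvSeq_eq hprod (s i)
  rw [hcount] at hodd
  exact count_pos_iff.mp (Nat.pos_of_ne_zero fun h0 => by simp [h0] at hodd)

theorem exists_wordProd_mul_simple_eq_eraseIdx {ω : List B} {i : B}
    (h : cs.IsRightDescent (π ω) i) : ∃ k < ω.length, π ω * s i = π (ω.eraseIdx k) := by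
  obtain ⟨k, hk, hget⟩ := getElem_of_mem (cs.simple_mem_rightInvSeq_of_isRightDescent h)
  rw [length_rightInvSeq] at hk
  refine ⟨k, hk, ?_⟩
  rw [← wordProd_mul_getD_rightInvSeq, getD_eq_getElem _ _ (by simpa using hk), hget]

theorem exists_sublist_isReduced_wordProd_eq (ω : List B) :
    ∃ ψ, ψ <+ ω ∧ cs.IsReduced ψ ∧ π ψ = π ω := by
  induction ω using reverseRecOn with
  | nil => exact ⟨[], Sublist.refl _, by simp [IsReduced], rfl⟩
  | append_singleton τ i ih =>
    obtain ⟨ψ, hsub, hψ, hψτ⟩ := ih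
    have hsub' : ψ <+ τ ++ [i] := hsub.trans (sublist_append_left τ [i])
    rw [wordProd_append, wordProd_singleton, ← hψτ]
    by_cases hdesc : cs.IsRightDescent (π ψ) i
    · obtain ⟨k, hk, heq⟩ := cs.exists_wordProd_mul_simple_eq_eraseIdx hdesc
      refine ⟨ψ.eraseIdx k, (eraseIdx_sublist ψ k).trans hsub', ?_, heq.symm⟩
      have := cs.isRightDescent_iff.mp hdesc
      rw [hψ.eq] at this
      rw [IsReduced, ← heq, length_eraseIdx_of_lt hk]
      omega
    · refine ⟨ψ ++ [i], hsub.append_right [i] |>.trans (by simp), ?_, ?_⟩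
      · rw [IsReduced, wordProd_append, wordProd_singleton, cs.not_isRightDescent_iff.mp hdesc,
          hψ.eq, length_append, length_singleton]
      · rw [wordProd_append, wordProd_singleton]

theorem exists_simple_eq_of_wordProd_eq_simple {ω : List B} {i : B} (h : π ω = s i) :
    ∃ c ∈ ω, s c = s i := by
  obtain ⟨ψ, hsub, hψ, hψω⟩ := cs.exists_sublist_isReduced_wordProd_eq ω
  have hlen : ψ.length = 1 := by rw [← hψ.eq, hψω, h, length_simple]
  obtain ⟨c, rfl⟩ := List.length_eq_one_iff.mp hlen
  exact ⟨c, hsub.subset (mem_singleton_self c), by rwa [wordProd_singleton, h] at hψω⟩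

theorem exists_simple_eq_of_mem_of_isReduced {ξ ν : List B} (hξ : cs.IsReduced ξ)
    (h : π ξ = π ν) {i : B} (hi : i ∈ ξ) : ∃ c ∈ ν, s c = s i := by
  induction ξ using reverseRecOn generalizing ν with
  | nil => simp at hi
  | append_singleton τ j ih =>
    obtain ⟨ν', hsub, hν', hν'ν⟩ := cs.exists_sublist_isReduced_wordProd_eq ν
    have hτ : cs.IsReduced τ := by simpa using hξ.take τ.length
    have hν'τ : π ν' * s j = π τ := by
      rw [hν'ν, ← h, wordProd_append, wordProd_singleton, simple_mul_simple_cancel_right]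
    have hdesc : cs.IsRightDescent (π ν') j := by
      rw [IsRightDescent, hν'τ, hτ.eq, hν'ν, ← h, hξ.eq, length_append, length_singleton]
      omega
    obtain ⟨k, -, hk⟩ := cs.exists_wordProd_mul_simple_eq_eraseIdx hdesc
    have herase : ν'.eraseIdx k <+ ν := (eraseIdx_sublist ν' k).trans hsub
    rcases mem_append.mp hi with hiτ | hij
    · obtain ⟨c, hc, hci⟩ := ih hτ (hν'τ.symm.trans hk) hiτ
      exact ⟨c, herase.subset hc, hci⟩
    · rw [mem_singleton.mp hij]
      have hj : π ((ν'.eraseIdx k).reverse ++ ν') = s j := by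
        rw [wordProd_append, wordProd_reverse, ← hk, mul_inv_rev, inv_simple,
          inv_mul_cancel_right]
      obtain ⟨c, hc, hcj⟩ := cs.exists_simple_eq_of_wordProd_eq_simple hj
      rcases mem_append.mp hc with hc | hc
      · exact ⟨c, herase.subset (mem_reverse.mp hc), hcj⟩
      · exact ⟨c, hsub.subset hc, hcj⟩

-- `cs.simple` is not known to be injective, so a letter is only determined by its reflection.
theorem mem_supp_of_mem_of_simple_eq {μ : List B} (hμ : cs.IsReduced μ) {c i : B} (hc : c ∈ μ)
    (h : s c = s i) : i ∈ cs.supp (π μ) := by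
  classical
  set ν := μ.map fun d => if s d = s i then i else d
  have hπ : π ν = π μ := by
    refine congrArg List.prod ?_
    simp only [ν, map_map]
    exact map_congr_left fun d _ => by by_cases hd : s d = s i <;> simp [hd]
  refine ⟨ν, ?_, hπ, mem_map.mpr ⟨c, hc, if_pos h⟩⟩
  rw [IsReduced, hπ, hμ.eq, length_map]

theorem supp_subset_of_bruhatLE {u w : W} (h : cs.BruhatLE u w) : cs.supp u ⊆ cs.supp w := by
  rintro i ⟨ξ, hξ, rfl, hi⟩
  obtain ⟨μ, hμ, rfl, μ', hsub, hμ'⟩ := h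
  obtain ⟨c, hc, hci⟩ := cs.exists_simple_eq_of_mem_of_isReduced hξ hμ'.symm hi
  exact cs.mem_supp_of_mem_of_simple_eq hμ (hsub.subset hc) hci

theorem supp_mul_subset (u v : W) : cs.supp (u * v) ⊆ cs.supp u ∪ cs.supp v := by
  obtain ⟨α, hα, rfl⟩ := cs.exists_isReduced u
  obtain ⟨β, hβ, rfl⟩ := cs.exists_isReduced v
  rintro i ⟨ξ, hξ, hξαβ, hi⟩
  obtain ⟨c, hc, hci⟩ := cs.exists_simple_eq_of_mem_of_isReduced hξ
    (hξαβ.trans (cs.wordProd_append α β).symm) hi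
  rcases mem_append.mp hc with hc | hc
  · exact Or.inl (cs.mem_supp_of_mem_of_simple_eq hα hc hci)
  · exact Or.inr (cs.mem_supp_of_mem_of_simple_eq hβ hc hci)

theorem bruhatLE_refl (w : W) : cs.BruhatLE w w := by
  obtain ⟨ω, hω, rfl⟩ := cs.exists_isReduced w
  exact ⟨ω, hω, rfl, ω, Sublist.refl ω, rfl⟩

theorem one_bruhatLE (w : W) : cs.BruhatLE 1 w := by
  obtain ⟨ω, hω, rfl⟩ := cs.exists_isReduced w
  exact ⟨ω, hω, rfl, [], nil_sublist ω, wordProd_nil cs⟩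

end CoxeterSystem

/-- For the Demazure product `x * y`,
`supp(x * y) = supp(x) ∪ supp(y)`. -/
theorem stmt2 {B W : Type*} [Group W] {M : CoxeterMatrix B} (cs : CoxeterSystem M W)
    (x y m : W) (hm : cs.IsDemazureProd x y m) :
    cs.supp m = cs.supp x ∪ cs.supp y := by
  obtain ⟨⟨u, u', hu, hu', rfl⟩, hmax⟩ := hm
  have hx : cs.BruhatLE x (u * u') :=
    hmax x ⟨x, 1, cs.bruhatLE_refl x, cs.one_bruhatLE y, (mul_one x).symm⟩
  have hy : cs.BruhatLE y (u * u') :=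
    hmax y ⟨1, y, cs.one_bruhatLE x, cs.bruhatLE_refl y, (one_mul y).symm⟩
  refine Set.Subset.antisymm ?_ ?_
  · exact (cs.supp_mul_subset u u').trans
      (Set.union_subset_union (cs.supp_subset_of_bruhatLE hu) (cs.supp_subset_of_bruhatLE hu'))
  · exact Set.union_subset (cs.supp_subset_of_bruhatLE hx) (cs.supp_subset_of_bruhatLE hy)
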